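/- Under the error dynamics Ė_A = -k₁E_A - AE_b, Ė_b = k₂π_𝔤(AᵀE_A) with k₁,k₂ > 0, the quantities ‖E_A(t)‖ and ‖E_b(t)‖ are bounded for all t ≥ 0, with (k₂/2)‖E_A(t)‖² + (1/2)‖E_b(t)‖² ≤ (k₂/2)‖E_A(0)‖² + (1/2)‖E_b(0)‖² for all t ≥ 0. -/

import Mathlib

open Matrix

attribute [local instance] Matrix.frobeniusSeminormedAddCommGroup
  Matrix.frobeniusNormedAddCommGroup Matrix.frobeniusNormedSpace

/-- Frobenius inner product `⟨A, B⟩ = trace (Aᵀ B)`. -/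
noncomputable def frobInner {n : ℕ} (A B : Matrix (Fin n) (Fin n) ℝ) : ℝ :=
  (Aᵀ * B).trace

/-!
With `V = (k₂/2)‖E_A‖² + (1/2)‖E_b‖²`, the cross terms of `V̇` are `-k₂⟨E_A, A E_b⟩` and
`k₂⟨E_b, π(Aᵀ E_A)⟩ = k₂⟨Aᵀ E_A, E_b⟩ = k₂⟨E_A, A E_b⟩`, the projection dropping out because
`E_b ∈ 𝔤`. They cancel, leaving `V̇ = -k₁k₂‖E_A‖² ≤ 0`, so `V` is antitone on `[0, ∞)`.
-/

/-- Transporting to this `L²` space of rows turns the Frobenius norm into a Hilbert norm and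
`frobInner` into its inner product. -/
noncomputable def Matrix.frobeniusL2 (m n : Type*) [Fintype m] [Fintype n] :
    Matrix m n ℝ →ₗᵢ[ℝ] WithLp 2 (m → EuclideanSpace ℝ n) where
  toFun M := WithLp.toLp 2 fun i => WithLp.toLp 2 (M i)
  map_add' _ _ := rfl
  map_smul' _ _ := rfl
  norm_map' _ := rfl

theorem inner_frobeniusL2 {n : ℕ} (M N : Matrix (Fin n) (Fin n) ℝ) :
    inner ℝ (frobeniusL2 _ _ M) (frobeniusL2 _ _ N) = frobInner M N := by
  simp only [frobeniusL2, LinearIsometry.coe_mk, PiLp.inner_apply, RCLike.inner_apply,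
    Real.ringHom_apply, mul_comm, frobInner, trace, diag_apply, Matrix.mul_apply, transpose_apply]
  exact Finset.sum_comm

theorem frobInner_comm {n : ℕ} (X Y : Matrix (Fin n) (Fin n) ℝ) :
    frobInner X Y = frobInner Y X := by
  rw [← inner_frobeniusL2, ← inner_frobeniusL2, real_inner_comm]

theorem frobInner_transpose_mul_left {n : ℕ} (A X Y : Matrix (Fin n) (Fin n) ℝ) :
    frobInner (Aᵀ * X) Y = frobInner X (A * Y) := by
  simp [frobInner, transpose_mul, Matrix.mul_assoc]

theorem HasDerivAt.frobenius_norm_sq {n : ℕ} {M : ℝ → Matrix (Fin n) (Fin n) ℝ}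
    {M' : Matrix (Fin n) (Fin n) ℝ} {t : ℝ} (h : HasDerivAt M M' t) :
    HasDerivAt (fun s => ‖M s‖ ^ 2) (2 * frobInner (M t) M') t := by
  have hL := (frobeniusL2 (Fin n) (Fin n)).toContinuousLinearMap.hasFDerivAt.comp_hasDerivAt t h
  simpa only [Function.comp_def, LinearIsometry.coe_toContinuousLinearMap,
    LinearIsometry.norm_map, inner_frobeniusL2] using hL.norm_sq

theorem antitoneOn_Ici_of_hasDerivAt_nonpos {f f' : ℝ → ℝ} {a : ℝ}
    (hf : ∀ x, a ≤ x → HasDerivAt f (f' x) x) (hf' : ∀ x, a ≤ x → f' x ≤ 0) :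
    AntitoneOn f (Set.Ici a) := by
  refine antitoneOn_of_hasDerivWithinAt_nonpos (f' := f') (convex_Ici a)
    (HasDerivAt.continuousOn fun x hx => hf x hx) (fun x hx => ?_) (fun x hx => ?_)
  all_goals rw [interior_Ici] at hx
  exacts [(hf x (le_of_lt hx)).hasDerivWithinAt, hf' x (le_of_lt hx)]

theorem hasDerivAt_errorDynamics_lyapunov {n : ℕ} (𝔤 : Submodule ℝ (Matrix (Fin n) (Fin n) ℝ))
    (π : Matrix (Fin n) (Fin n) ℝ → Matrix (Fin n) (Fin n) ℝ)
    (hπ_orth : ∀ X, ∀ w ∈ 𝔤, frobInner (X - π X) w = 0) (k₁ k₂ : ℝ)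
    (A E_A E_b : ℝ → Matrix (Fin n) (Fin n) ℝ) {t : ℝ} (hEb_mem : E_b t ∈ 𝔤)
    (hEA : HasDerivAt E_A (-(k₁ • E_A t) - A t * E_b t) t)
    (hEb : HasDerivAt E_b (k₂ • π ((A t)ᵀ * E_A t)) t) :
    HasDerivAt (fun s => k₂ / 2 * ‖E_A s‖ ^ 2 + 1 / 2 * ‖E_b s‖ ^ 2)
      (-(k₁ * k₂) * ‖E_A t‖ ^ 2) t := by
  have hproj : frobInner (E_b t) (π ((A t)ᵀ * E_A t)) = frobInner (E_A t) (A t * E_b t) := by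
    have h := hπ_orth ((A t)ᵀ * E_A t) (E_b t) hEb_mem
    rw [← inner_frobeniusL2, map_sub, inner_sub_left, sub_eq_zero, inner_frobeniusL2,
      inner_frobeniusL2] at h
    rw [frobInner_comm, ← h, frobInner_transpose_mul_left]
  have hEA_inner : frobInner (E_A t) (-(k₁ • E_A t) - A t * E_b t)
      = -(k₁ * ‖E_A t‖ ^ 2) - frobInner (E_A t) (A t * E_b t) := by
    rw [← inner_frobeniusL2, map_sub, map_neg, map_smul, inner_sub_right, inner_neg_right,
      real_inner_smul_right, real_inner_self_eq_norm_sq, LinearIsometry.norm_map, inner_frobeniusL2]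
  have hEb_inner : frobInner (E_b t) (k₂ • π ((A t)ᵀ * E_A t))
      = k₂ * frobInner (E_A t) (A t * E_b t) := by
    rw [← inner_frobeniusL2, map_smul, real_inner_smul_right, inner_frobeniusL2, hproj]
  refine ((hEA.frobenius_norm_sq.const_mul (k₂ / 2)).add
    (hEb.frobenius_norm_sq.const_mul (1 / 2))).congr_deriv ?_
  rw [hEA_inner, hEb_inner]
  ring

theorem stmt3_general {n : ℕ} (𝔤 : Submodule ℝ (Matrix (Fin n) (Fin n) ℝ))
    (π : Matrix (Fin n) (Fin n) ℝ → Matrix (Fin n) (Fin n) ℝ)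
    (hπ_orth : ∀ X, ∀ w ∈ 𝔤, frobInner (X - π X) w = 0)
    (k₁ k₂ : ℝ) (hk₁ : 0 < k₁) (hk₂ : 0 < k₂)
    (A E_A E_b : ℝ → Matrix (Fin n) (Fin n) ℝ)
    (hEb_mem : ∀ t, 0 ≤ t → E_b t ∈ 𝔤)
    (hEA : ∀ t, 0 ≤ t → HasDerivAt E_A (-(k₁ • E_A t) - A t * E_b t) t)
    (hEb : ∀ t, 0 ≤ t → HasDerivAt E_b (k₂ • π ((A t)ᵀ * E_A t)) t) :
    ∀ t, 0 ≤ t →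
      k₂ / 2 * ‖E_A t‖ ^ 2 + 1 / 2 * ‖E_b t‖ ^ 2 ≤
        k₂ / 2 * ‖E_A 0‖ ^ 2 + 1 / 2 * ‖E_b 0‖ ^ 2 := by
  have hV : AntitoneOn (fun s => k₂ / 2 * ‖E_A s‖ ^ 2 + 1 / 2 * ‖E_b s‖ ^ 2) (Set.Ici 0) :=
    antitoneOn_Ici_of_hasDerivAt_nonpos
      (fun s hs => hasDerivAt_errorDynamics_lyapunov 𝔤 π hπ_orth k₁ k₂ A E_A E_b (hEb_mem s hs)
        (hEA s hs) (hEb s hs))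
      (fun s _ => mul_nonpos_of_nonpos_of_nonneg (neg_nonpos.mpr (mul_pos hk₁ hk₂).le)
        (sq_nonneg _))
  exact fun t ht => hV Set.self_mem_Ici ht ht

/-- Under the error dynamics `Ė_A = -k₁ E_A - A E_b`, `Ė_b = k₂ π_𝔤(Aᵀ E_A)` with
`k₁, k₂ > 0`, the quantities `‖E_A(t)‖` and `‖E_b(t)‖` are bounded on `[0, ∞)`:
`(k₂/2)‖E_A(t)‖² + (1/2)‖E_b(t)‖² ≤ (k₂/2)‖E_A(0)‖² + (1/2)‖E_b(0)‖²` for all `t ≥ 0`. -/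
theorem stmt3 {n : ℕ} (𝔤 : Submodule ℝ (Matrix (Fin n) (Fin n) ℝ))
    (π : Matrix (Fin n) (Fin n) ℝ → Matrix (Fin n) (Fin n) ℝ)
    (hπ_mem : ∀ X, π X ∈ 𝔤)
    (hπ_orth : ∀ X, ∀ w ∈ 𝔤, frobInner (X - π X) w = 0)
    (k₁ k₂ : ℝ) (hk₁ : 0 < k₁) (hk₂ : 0 < k₂)
    (A E_A E_b : ℝ → Matrix (Fin n) (Fin n) ℝ)
    (hEb_mem : ∀ t, 0 ≤ t → E_b t ∈ 𝔤)
    (hEA : ∀ t, 0 ≤ t → HasDerivAt E_A (-(k₁ • E_A t) - A t * E_b t) t)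
    (hEb : ∀ t, 0 ≤ t → HasDerivAt E_b (k₂ • π ((A t)ᵀ * E_A t)) t) :
    ∀ t, 0 ≤ t →
      k₂ / 2 * ‖E_A t‖ ^ 2 + 1 / 2 * ‖E_b t‖ ^ 2 ≤
        k₂ / 2 * ‖E_A 0‖ ^ 2 + 1 / 2 * ‖E_b 0‖ ^ 2 :=
  stmt3_general 𝔤 π hπ_orth k₁ k₂ hk₁ hk₂ A E_A E_b hEb_mem hEA hEb
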